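/- Let w₁ > ⋯ > wₙ > 0 be super-increasing and let q ∈ (0, w(N)] with associated subset A(q) = {a₀ < a₁ < ⋯ < a_r} (the unique P with q ∈ (w(P⁻), w(P)]). Then for each agent i: if i ∉ A(q), the Shapley value is φᵢ(q) = Σ_{t: a_t > i} 1/(a_t · C(a_t − 1, t)); if i = a_s ∈ A(q), then φᵢ(q) = 1/(a_s · C(a_s − 1, s)) − Σ_{t: a_t > i} 1/(a_t · C(a_t − 1, t − 1)). -/

import Mathlib

/-- The Shapley value of agent `i` in the weighted voting game `(w, q)` on `Fin n`. -/
noncomputable def shapley (n : ℕ) (w : Fin n → ℝ) (q : ℝ) (i : Fin n) : ℝ :=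
  (∑ σ : Equiv.Perm (Fin n),
      ((if q ≤ ∑ j ∈ insert i (Finset.univ.filter fun j => σ j < σ i), w j then (1:ℝ) else 0)
        - (if q ≤ ∑ j ∈ Finset.univ.filter (fun j => σ j < σ i), w j then (1:ℝ) else 0)))
    / (Nat.factorial n)

/-!
Super-increasing weights order coalitions lexicographically: `w(S) < w(T)` iff the first agent
on which `S` and `T` differ lies in `T`. Since `β` is super-increasing as well and `β(A⁻) + 1 =
β(A)`, a coalition `S` wins iff it is not lexicographically below `A`, and `S` is below `A` at
exactly one `j ∈ A`, namely the one with `S ∩ [0, j] = A ∩ [0, j)`. The marginal contribution of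
`i` is therefore a signed sum over `j ∈ A` of indicators of events "the predecessors of `i`
within `[0, j]` form the set `B`", and in a uniformly random order such an event has
probability `1 / ((j + 1) C(j, |B|))`.
-/

open Finset Equiv Nat

section LexLt

variable {α : Type*} [LinearOrder α] [LocallyFiniteOrderBot α]

/-- `X ∩ Iic j = Y ∩ Iio j` says that `j ∉ X` and that `X` and `Y` agree below `j`. -/
def LexLt (X Y : Finset α) : Prop :=
  ∃ j ∈ Y, X ∩ Iic j = Y ∩ Iio j

theorem lexLt_of_forall_lt_iff {X Y : Finset α} {j : α} (hjY : j ∈ Y) (hjX : j ∉ X)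
    (h : ∀ k < j, k ∈ X ↔ k ∈ Y) : LexLt X Y := by
  refine ⟨j, hjY, ?_⟩
  ext k
  simp only [mem_inter, mem_Iic, mem_Iio]
  rcases lt_trichotomy k j with hk | rfl | hk
  · simp [hk, hk.le, h k hk]
  · simp [hjX]
  · simp [not_le.mpr hk, not_lt.mpr hk.le]

theorem lexLt_or_lexLt_of_ne {X Y : Finset α} (hXY : X ≠ Y) : LexLt X Y ∨ LexLt Y X := by
  have hne : (symmDiff X Y).Nonempty := by
    rwa [nonempty_iff_ne_empty, Ne, symmDiff_eq_empty]
  have hmin := (symmDiff X Y).min'_mem hne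
  have hbelow : ∀ k < (symmDiff X Y).min' hne, k ∈ X ↔ k ∈ Y := fun k hk => by
    by_contra h
    exact not_le.mpr hk (min'_le _ k (by rw [mem_symmDiff]; tauto))
  rw [mem_symmDiff] at hmin
  rcases hmin with ⟨hX, hY⟩ | ⟨hY, hX⟩
  · exact Or.inr (lexLt_of_forall_lt_iff hX hY fun k hk => (hbelow k hk).symm)
  · exact Or.inl (lexLt_of_forall_lt_iff hY hX hbelow)

theorem eq_of_inter_Iic_eq_inter_Iio {X Y : Finset α} {j k : α} (hj : j ∈ Y)
    (hjX : X ∩ Iic j = Y ∩ Iio j) (hk : k ∈ Y) (hkX : X ∩ Iic k = Y ∩ Iio k) : j = k := by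
  wlog hjk : j < k generalizing j k
  · exact (lt_or_eq_of_le (not_lt.mp hjk)).elim (fun h => (this hk hkX hj hjX h).symm) Eq.symm
  have : j ∈ X ∩ Iic k := by rw [hkX]; simp [hj, hjk]
  have : j ∈ Y ∩ Iio j := by rw [← hjX]; simpa using (mem_inter.mp this).1
  simp at this

open Classical in
theorem ite_lexLt_eq_sum {R : Type*} [AddCommMonoidWithOne R] (X Y : Finset α) :
    (if LexLt X Y then 1 else 0 : R) = ∑ j ∈ Y, if X ∩ Iic j = Y ∩ Iio j then 1 else 0 := by
  by_cases h : LexLt X Y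
  · obtain ⟨j, hjY, hj⟩ := h
    rw [if_pos ⟨j, hjY, hj⟩, sum_eq_single_of_mem j hjY, if_pos hj]
    exact fun k hk hkj => if_neg fun hk' => hkj (eq_of_inter_Iic_eq_inter_Iio hk hk' hjY hj)
  · rw [if_neg h, sum_eq_zero]
    exact fun j hj => if_neg fun hj' => h ⟨j, hj, hj'⟩

end LexLt

section SuperIncreasing

variable {α M : Type*} [LinearOrder α] [Fintype α]
  [AddCommMonoid M] [LinearOrder M] [IsOrderedCancelAddMonoid M]

def IsSuperIncreasing (w : α → M) : Prop :=
  ∀ i, ∑ j ∈ univ.filter (fun j => i < j), w j < w i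

theorem IsSuperIncreasing.pos {w : α → M} (hw : IsSuperIncreasing w) (i : α) : 0 < w i := by
  induction i using WellFoundedGT.induction with
  | _ i ih =>
    exact (sum_nonneg fun j hj => (ih j (mem_filter.mp hj).2).le).trans_lt (hw i)

variable [LocallyFiniteOrderBot α]

theorem IsSuperIncreasing.sum_lt_sum_of_lexLt {w : α → M} (hw : IsSuperIncreasing w)
    {X Y : Finset α} (h : LexLt X Y) : ∑ x ∈ X, w x < ∑ y ∈ Y, w y := by
  obtain ⟨j, hjY, hXY⟩ := h
  have hX : ∑ x ∈ X, w x = ∑ x ∈ Y ∩ Iio j, w x + ∑ x ∈ X.filter (j < ·), w x := by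
    rw [← sum_filter_add_sum_filter_not X (· ≤ j), ← hXY]
    simp only [not_le]
    congr 2; ext; simp
  have hrest : ∑ x ∈ X.filter (j < ·), w x < w j :=
    (sum_le_sum_of_subset_of_nonneg (filter_subset_filter _ (subset_univ X))
      fun y _ _ => (hw.pos y).le).trans_lt (hw j)
  have hY : ∑ y ∈ Y ∩ Iio j, w y + w j ≤ ∑ y ∈ Y, w y := by
    rw [add_comm, ← sum_insert (by simp)]
    exact sum_le_sum_of_subset_of_nonneg (insert_subset hjY inter_subset_left)
      fun y _ _ => (hw.pos y).le
  calc ∑ x ∈ X, w x < ∑ x ∈ Y ∩ Iio j, w x + w j := by rw [hX]; exact add_lt_add_right hrest _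
    _ ≤ _ := hY

theorem IsSuperIncreasing.sum_lt_sum_iff {w : α → M} (hw : IsSuperIncreasing w)
    {X Y : Finset α} : ∑ x ∈ X, w x < ∑ y ∈ Y, w y ↔ LexLt X Y := by
  refine ⟨fun hlt => ?_, hw.sum_lt_sum_of_lexLt⟩
  have hXY : X ≠ Y := by rintro rfl; exact lt_irrefl _ hlt
  exact (lexLt_or_lexLt_of_ne hXY).resolve_right
    fun h => lt_asymm hlt (hw.sum_lt_sum_of_lexLt h)

theorem IsSuperIncreasing.le_sum_iff_not_lexLt {w : α → M} (hw : IsSuperIncreasing w) {q : M}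
    {P A : Finset α} (hPA : ∀ S, LexLt S A → ¬ LexLt P S) (hlo : ∑ x ∈ P, w x < q)
    (hhi : q ≤ ∑ x ∈ A, w x) (S : Finset α) : q ≤ ∑ x ∈ S, w x ↔ ¬ LexLt S A := by
  rw [← hw.sum_lt_sum_iff]
  refine ⟨fun hq hSA => ?_, fun h => hhi.trans (not_lt.mp h)⟩
  have := hPA S (hw.sum_lt_sum_iff.mp hSA)
  rw [← hw.sum_lt_sum_iff, not_lt] at this
  exact not_le.mpr (this.trans_lt hlo) hq

end SuperIncreasing

theorem isSuperIncreasing_two_pow (n : ℕ) :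
    IsSuperIncreasing fun i : Fin n => 2 ^ (n - 1 - (i : ℕ)) := by
  intro i
  rw [← sum_image fun j hj k hk h => by
    simp only [coe_filter, Set.mem_ofPred_eq, mem_univ, true_and] at hj hk h
    exact Fin.ext (by omega)]
  refine Nat.geomSum_lt le_rfl fun k hk => ?_
  obtain ⟨j, hj, rfl⟩ := mem_image.mp hk
  have : (i : ℕ) < j := by simpa using hj
  omega

theorem not_lexLt_of_two_pow_sum_add_one {n : ℕ} {P A : Finset (Fin n)}
    (h : ∑ i ∈ P, 2 ^ (n - 1 - (i : ℕ)) + 1 = ∑ i ∈ A, 2 ^ (n - 1 - (i : ℕ)))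
    (S : Finset (Fin n)) (hSA : LexLt S A) : ¬ LexLt P S := by
  have hw := isSuperIncreasing_two_pow n
  rw [← hw.sum_lt_sum_iff] at hSA ⊢
  omega

section OrderIsoOfFin

variable {α : Type*} [LinearOrder α]

theorem sum_orderIsoOfFin {β : Type*} [AddCommMonoid β] (s : Finset α) (g : α → β) :
    ∑ t, g (s.orderIsoOfFin rfl t) = ∑ x ∈ s, g x :=
  ((s.orderIsoOfFin rfl).toEquiv.sum_comp fun x : s => g x).trans (sum_coe_sort s g)

theorem card_inter_Iio_orderIsoOfFin [LocallyFiniteOrderBot α] (s : Finset α) (t : Fin #s) :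
    #(s ∩ Iio (s.orderIsoOfFin rfl t : α)) = t := by
  have : s ∩ Iio (s.orderIsoOfFin rfl t : α) = (Iio t).map (s.orderEmbOfFin rfl).toEmbedding := by
    ext x
    simp only [mem_inter, mem_Iio, mem_map, RelEmbedding.coe_toEmbedding, coe_orderIsoOfFin_apply]
    constructor
    · rintro ⟨hx, hxt⟩
      obtain ⟨u, rfl⟩ : x ∈ Set.range (s.orderEmbOfFin rfl) := by
        rw [range_orderEmbOfFin]; exact hx
      exact ⟨u, (s.orderEmbOfFin rfl).lt_iff_lt.mp hxt, rfl⟩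
    · rintro ⟨u, hut, rfl⟩
      exact ⟨orderEmbOfFin_mem s rfl u, (s.orderEmbOfFin rfl).lt_iff_lt.mpr hut⟩
  rw [this, card_map, Fin.card_Iio]

end OrderIsoOfFin

theorem card_perm_comp_eq {α ι : Type*} [Fintype α] [DecidableEq α] [Fintype ι] [DecidableEq ι]
    (κ l : α → ι) (h : ∀ c, Fintype.card {a // l a = c} = Fintype.card {a // κ a = c}) :
    Fintype.card {σ : Perm α // κ ∘ σ = l} = ∏ c, (Fintype.card {a // l a = c})! := by
  set σ₀ : Perm α := ofFiberEquiv fun c => Fintype.equivOfCardEq (h c)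
  have hσ₀ : κ ∘ σ₀ = l := funext (ofFiberEquiv_map _)
  rw [← DomMulAct.stabilizer_card l]
  refine Fintype.card_congr ((Equiv.mulLeft σ₀⁻¹).subtypeEquiv fun σ => ?_)
  have : l ∘ ⇑(σ₀⁻¹ * σ) = κ ∘ σ := by ext a; simp [← hσ₀]
  change _ ↔ l ∘ ⇑(σ₀⁻¹ * σ) = l
  rw [this]

section PermutationCount

variable {n : ℕ}

def predSet (σ : Perm (Fin n)) (i : Fin n) : Finset (Fin n) := univ.filter fun j => σ j < σ i

theorem notMem_predSet (σ : Perm (Fin n)) (i : Fin n) : i ∉ predSet σ i := by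
  simp [predSet]

theorem card_predSet (σ : Perm (Fin n)) (i : Fin n) : #(predSet σ i) = σ i := by
  have : predSet σ i = (Iio (σ i)).map σ.symm.toEmbedding := by
    ext j; simp [predSet]
  rw [this, card_map, Fin.card_Iio]

theorem card_compare_eq (p : Fin n) (c : Ordering) :
    Fintype.card {v // compare v p = c}
      = match c with | .lt => p | .eq => 1 | .gt => n - 1 - p := by
  rw [Fintype.card_subtype]
  cases c
  · simp only [compare_lt_iff_lt]
    rw [show ({v | v < p} : Finset _) = Iio p by ext; simp, Fin.card_Iio]
  · simp [filter_eq']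
  · simp only [compare_gt_iff_gt]
    rw [show ({v | p < v} : Finset _) = Ioi p by ext; simp, Fin.card_Ioi]

theorem predSet_eq_iff_compare {σ : Perm (Fin n)} {i p : Fin n} {B : Finset (Fin n)}
    (hiB : i ∉ B) (hp : (p : ℕ) = #B) :
    predSet σ i = B ↔
      ∀ j, compare (σ j) p = if j ∈ B then .lt else if j = i then .eq else .gt := by
  constructor
  · rintro rfl j
    obtain rfl : σ i = p := Fin.ext ((card_predSet σ i).symm.trans hp.symm)
    simp only [predSet, mem_filter, mem_univ, true_and]
    rcases lt_trichotomy (σ j) (σ i) with h | h | h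
    · simp [h, compare_lt_iff_lt.mpr h]
    · simp [σ.injective h]
    · have hji : j ≠ i := by rintro rfl; exact lt_irrefl _ h
      simp [not_lt.mpr h.le, compare_gt_iff_gt.mpr h, hji]
  · intro h
    have hσi : σ i = p := by simpa [hiB] using h i
    ext j
    simp only [predSet, mem_filter, mem_univ, true_and, hσi, ← compare_lt_iff_lt, h]
    split_ifs <;> simp_all

theorem card_predSet_eq {i : Fin n} {B : Finset (Fin n)} (hiB : i ∉ B) :
    #{σ : Perm (Fin n) | predSet σ i = B} = (#B)! * (n - 1 - #B)! := by
  have hBn : #B < n := by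
    simpa [card_insert_of_notMem hiB] using card_le_univ (insert i B)
  set p : Fin n := ⟨#B, hBn⟩
  set l : Fin n → Ordering := fun j => if j ∈ B then .lt else if j = i then .eq else .gt
  have hl : ∀ c, Fintype.card {j // l j = c}
      = match c with | .lt => #B | .eq => 1 | .gt => n - 1 - #B := by
    intro c
    rw [Fintype.card_subtype]
    cases c
    · congr 1; ext j; simp only [l, mem_filter, mem_univ, true_and]; split_ifs <;> simp_all
    · rw [card_eq_one]; refine ⟨i, ?_⟩
      ext j
      by_cases hj : j = i
      · simp [l, hj, hiB]
      · simp only [l, mem_filter, mem_univ, true_and, mem_singleton, hj, if_false]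
        split_ifs <;> simp
    · have : ({j | l j = .gt} : Finset _) = (insert i B)ᶜ := by
        ext j; simp only [l, mem_filter, mem_univ, true_and, mem_compl, mem_insert]
        split_ifs <;> simp_all
      rw [this, card_compl, card_insert_of_notMem hiB, Fintype.card_fin]; dsimp only; omega
  have hpred : ∀ σ : Perm (Fin n), predSet σ i = B ↔ (compare · p) ∘ σ = l := fun σ =>
    (predSet_eq_iff_compare hiB rfl).trans funext_iff.symm
  rw [← Fintype.card_subtype, Fintype.card_congr (Equiv.subtypeEquivRight hpred),
    card_perm_comp_eq _ _ fun c => (hl c).trans (card_compare_eq p c).symm,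
    show (univ : Finset Ordering) = {.lt, .eq, .gt} from rfl]
  simp [hl]

theorem card_predSet_inter_eq_add_card_insert {i x : Fin n} {M B : Finset (Fin n)}
    (hxM : x ∉ M) (hBM : B ⊆ M) :
    #{σ : Perm (Fin n) | predSet σ i ∩ M = B} =
      #{σ : Perm (Fin n) | predSet σ i ∩ insert x M = insert x B} +
        #{σ : Perm (Fin n) | predSet σ i ∩ insert x M = B} := by
  have hxB : x ∉ B := fun h => hxM (hBM h)
  rw [← card_filter_add_card_filter_not (p := fun σ => x ∈ predSet σ i), filter_filter,
    filter_filter]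
  congr 1 <;> congr 1 <;> ext σ <;> simp only [mem_filter, mem_univ, true_and] <;>
    by_cases hx : x ∈ predSet σ i
  · have : x ∉ predSet σ i ∩ M := fun h => hxM (mem_inter.mp h).2
    simp only [inter_insert_of_mem hx, hx, and_true]
    exact ⟨fun h => h ▸ rfl, fun h => by simpa [this, hxB] using congrArg (erase · x) h⟩
  · simp only [inter_insert_of_notMem hx, hx, and_false, false_iff]
    intro h; exact hxM (mem_inter.mp (h ▸ mem_insert_self x B)).2
  · simp only [inter_insert_of_mem hx, hx, not_true, and_false, false_iff]
    rintro h; exact hxB (h ▸ mem_insert_self x _)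
  · simp [inter_insert_of_notMem hx, hx]

/-- Downward induction on `#M`, splitting on whether an agent `x ∉ M` precedes `i`. -/
theorem card_predSet_inter_eq {i : Fin n} {M B : Finset (Fin n)} (hiM : i ∈ M) (hBM : B ⊆ M)
    (hiB : i ∉ B) :
    #{σ : Perm (Fin n) | predSet σ i ∩ M = B} * (#M)! = n ! * (#B)! * (#M - 1 - #B)! := by
  induction hk : n - #M generalizing M B with
  | zero =>
    have hMn : #M = n := by have := card_le_univ M; simp only [Fintype.card_fin] at this; omega
    obtain rfl : M = univ := (card_eq_iff_eq_univ M).mp (by simpa using hMn)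
    simp only [inter_univ, card_predSet_eq hiB, hMn]
    ring
  | succ k ih =>
    obtain ⟨x, hxM⟩ : ∃ x, x ∉ M := by
      by_contra! h
      simp [eq_univ_iff_forall.mpr h] at hk
    have hcard : #(insert x M) = #M + 1 := card_insert_of_notMem hxM
    have h₁ := ih (mem_insert_of_mem hiM) (insert_subset_insert x hBM)
      (by simp [hiB, ne_of_mem_of_not_mem hiM hxM]) (by omega)
    have h₂ := ih (mem_insert_of_mem hiM) (hBM.trans (subset_insert x M)) hiB (by omega)
    rw [hcard, card_insert_of_notMem fun h => hxM (hBM h)] at h₁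
    rw [hcard] at h₂
    have hbm : #B + 1 ≤ #M := by
      simpa [card_insert_of_notMem hiB] using card_le_card (insert_subset hiM hBM)
    obtain ⟨c, hc⟩ : ∃ c, #M = #B + c + 1 := ⟨#M - #B - 1, by omega⟩
    rw [hc] at h₁ h₂ ⊢
    rw [show #B + c + 1 + 1 - 1 - (#B + 1) = c by omega] at h₁
    rw [show #B + c + 1 + 1 - 1 - #B = c + 1 by omega] at h₂
    rw [show #B + c + 1 - 1 - #B = c by omega]
    refine Nat.eq_of_mul_eq_mul_left (show 0 < #B + c + 2 by omega) ?_
    rw [card_predSet_inter_eq_add_card_insert hxM hBM]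
    set N₁ := #{σ : Perm (Fin n) | predSet σ i ∩ insert x M = insert x B}
    set N₂ := #{σ : Perm (Fin n) | predSet σ i ∩ insert x M = B}
    calc (#B + c + 2) * ((N₁ + N₂) * (#B + c + 1)!)
        = N₁ * (#B + c + 1 + 1)! + N₂ * (#B + c + 1 + 1)! := by
          rw [factorial_succ (#B + c + 1)]; ring
      _ = (#B + c + 2) * (n ! * (#B)! * c !) := by
        rw [h₁, h₂, factorial_succ (#B), factorial_succ c]; ring

theorem card_predSet_inter_Iic_mul {i j : Fin n} {B : Finset (Fin n)} (hij : i ≤ j)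
    (hB : B ⊆ Iio j) (hiB : i ∉ B) :
    #{σ : Perm (Fin n) | predSet σ i ∩ Iic j = B} * ((j + 1) * (j : ℕ).choose #B) = n ! := by
  have h := card_predSet_inter_eq (mem_Iic.mpr hij) (hB.trans Iio_subset_Iic_self) hiB
  have hBj : #B ≤ j := by simpa using card_le_card hB
  rw [Fin.card_Iic, add_tsub_cancel_right, factorial_succ,
    ← choose_mul_factorial_mul_factorial hBj] at h
  refine Nat.eq_of_mul_eq_mul_right (mul_pos (factorial_pos #B) (factorial_pos (j - #B))) ?_
  linarith

theorem card_predSet_inter_Iic_div {i j : Fin n} {B : Finset (Fin n)} (hij : i ≤ j)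
    (hB : B ⊆ Iio j) (hiB : i ∉ B) :
    (#{σ : Perm (Fin n) | predSet σ i ∩ Iic j = B} : ℝ) / n ! =
      (1 : ℝ) / (((j : ℕ) + 1) * (j : ℕ).choose #B) := by
  have hC : 0 < (j : ℕ).choose #B := choose_pos (by simpa using card_le_card hB)
  rw [div_eq_div_iff (by positivity) (by positivity), one_mul]
  exact_mod_cast card_predSet_inter_Iic_mul hij hB hiB

theorem card_predSet_inter_Iic_sub_card_insert_div {i j : Fin n} {B : Finset (Fin n)}
    (hB : B ⊆ Iio j) :
    ((#{σ : Perm (Fin n) | predSet σ i ∩ Iic j = B} : ℝ)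
        - #{σ : Perm (Fin n) | insert i (predSet σ i) ∩ Iic j = B}) / n ! =
      (if i ≤ j ∧ i ∉ B then (1 : ℝ) / (((j : ℕ) + 1) * (j : ℕ).choose #B) else 0)
        - if i ∈ B then (1 : ℝ) / (((j : ℕ) + 1) * (j : ℕ).choose (#B - 1)) else 0 := by
  rcases lt_or_ge j i with hji | hij
  · have hiB : i ∉ B := fun h => (mem_Iio.mp (hB h)).not_gt hji
    simp [insert_inter_of_notMem (by simpa using hji : i ∉ Iic j), hiB, not_le.mpr hji]
  by_cases hiB : i ∈ B
  · have hfirst : ∀ σ : Perm (Fin n), predSet σ i ∩ Iic j ≠ B := fun σ h =>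
      notMem_predSet σ i (mem_inter.mp (h ▸ hiB)).1
    have hsecond : ∀ σ : Perm (Fin n),
        insert i (predSet σ i) ∩ Iic j = B ↔ predSet σ i ∩ Iic j = B.erase i := by
      intro σ
      have hi : i ∉ predSet σ i ∩ Iic j := fun h => notMem_predSet σ i (mem_inter.mp h).1
      rw [insert_inter_of_mem (mem_Iic.mpr hij)]
      exact ⟨fun h => by rw [← h, erase_insert hi], fun h => by rw [h, insert_erase hiB]⟩
    rw [filter_false_of_mem fun σ _ => hfirst σ, filter_congr fun σ _ => hsecond σ,
      ← card_erase_of_mem hiB, card_empty, Nat.cast_zero, zero_sub, neg_div,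
      card_predSet_inter_Iic_div hij ((erase_subset i B).trans hB) (notMem_erase i B)]
    simp [hiB]
  · have hsecond : ∀ σ : Perm (Fin n), insert i (predSet σ i) ∩ Iic j ≠ B := fun σ h =>
      hiB (h ▸ mem_inter.mpr ⟨mem_insert_self i _, mem_Iic.mpr hij⟩)
    rw [filter_false_of_mem fun σ _ => hsecond σ, card_empty, Nat.cast_zero, sub_zero,
      card_predSet_inter_Iic_div hij hB hiB]
    simp [hiB, hij]

end PermutationCount

theorem shapley_eq_sum_of_le_sum_iff {n : ℕ} {w : Fin n → ℝ} {q : ℝ} {A : Finset (Fin n)}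
    (hwin : ∀ S : Finset (Fin n), q ≤ ∑ j ∈ S, w j ↔ ¬ LexLt S A) (i : Fin n) :
    shapley n w q i = ∑ j ∈ A,
      ((if i ≤ j ∧ i ∉ A ∩ Iio j then
          (1 : ℝ) / (((j : ℕ) + 1) * (j : ℕ).choose #(A ∩ Iio j)) else 0)
        - if i ∈ A ∩ Iio j then
          (1 : ℝ) / (((j : ℕ) + 1) * (j : ℕ).choose (#(A ∩ Iio j) - 1)) else 0) := by
  classical
  have hmarginal : ∀ S : Finset (Fin n),
      ((if q ≤ ∑ j ∈ insert i S, w j then 1 else 0) - if q ≤ ∑ j ∈ S, w j then 1 else 0 : ℝ) =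
        ∑ j ∈ A, ((if S ∩ Iic j = A ∩ Iio j then 1 else 0)
          - if insert i S ∩ Iic j = A ∩ Iio j then 1 else 0) := by
    intro S
    simp only [hwin, ite_not, sum_sub_distrib, ← ite_lexLt_eq_sum]
    split_ifs <;> norm_num
  rw [← sum_congr rfl fun j _ => card_predSet_inter_Iic_sub_card_insert_div inter_subset_right,
    ← sum_div, shapley]
  simp only [← predSet.eq_def, hmarginal]
  rw [sum_comm]
  simp only [sum_sub_distrib, sum_boole]

/-- Agents are `0`-indexed: agent `i : Fin n` is the paper's agent `i + 1`, so the paper's `a_t`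
is `(f t : ℕ) + 1` and `C(a_t - 1, t) = C(f t, t)`; `Pm` is the paper's `A⁻`. -/
theorem stmt12_general (n : ℕ) (w : Fin n → ℝ)
    (hsi : ∀ i : Fin n, (∑ j ∈ Finset.univ.filter (fun j => i < j), w j) < w i)
    (q : ℝ)
    (A Pm : Finset (Fin n))
    (hβ : (∑ i ∈ Pm, 2^(n - 1 - (i:ℕ)) : ℕ) + 1 = ∑ i ∈ A, 2^(n - 1 - (i:ℕ)))
    (hlo : (∑ i ∈ Pm, w i) < q) (hhi : q ≤ ∑ i ∈ A, w i)
    (f : Fin A.card → Fin n) (hf : ∀ t, f t = (A.orderIsoOfFin rfl t : Fin n)) :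
    (∀ i : Fin n, i ∉ A →
      shapley n w q i
        = ∑ t : Fin A.card,
            if i < f t then (1:ℝ)/(((f t : ℕ) + 1) * Nat.choose (f t : ℕ) (t : ℕ)) else 0) ∧
    (∀ s : Fin A.card,
      shapley n w q (f s)
        = (1:ℝ)/(((f s : ℕ) + 1) * Nat.choose (f s : ℕ) (s : ℕ))
          - ∑ t : Fin A.card,
              if f s < f t then (1:ℝ)/(((f t : ℕ) + 1) * Nat.choose (f t : ℕ) ((t : ℕ) - 1))
              else 0) := by
  simp only [hf]
  have hwin := IsSuperIncreasing.le_sum_iff_not_lexLt hsi (not_lexLt_of_two_pow_sum_add_one hβ)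
    hlo hhi
  refine ⟨fun i hi => ?_, fun s => ?_⟩
  · rw [shapley_eq_sum_of_le_sum_iff hwin, ← sum_orderIsoOfFin]
    refine sum_congr rfl fun t _ => ?_
    rw [card_inter_Iio_orderIsoOfFin]
    have hj := (A.orderIsoOfFin rfl t).2
    generalize (A.orderIsoOfFin rfl t : Fin n) = j at hj ⊢
    have hij : i ≠ j := fun h => hi (h ▸ hj)
    simp [hi, hij.le_iff_lt]
  · rw [shapley_eq_sum_of_le_sum_iff hwin, ← sum_orderIsoOfFin]
    have hkey : ∀ t, ((A.orderIsoOfFin rfl s : Fin n) ≤ A.orderIsoOfFin rfl t ∧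
        (A.orderIsoOfFin rfl s : Fin n) ∉ A ∩ Iio (A.orderIsoOfFin rfl t : Fin n)) ↔ s = t := by
      intro t
      simpa using le_antisymm_iff.symm
    simp only [card_inter_Iio_orderIsoOfFin, hkey]
    simp only [mem_inter, coe_mem, true_and, mem_Iio]
    rw [sum_sub_distrib, sum_ite_eq]
    simp

/-- Closed-form formula for the Shapley values with super-increasing weights.
Agents are `0`-indexed: agent `i : Fin n` is the paper's agent `i+1`, so the paper's
`a_t` equals `(f t : ℕ) + 1` and `C(a_t - 1, t) = C((f t : ℕ), t)`.
`A` is the set with `q ∈ (w(A⁻), w(A)]` (where `β(A⁻) + 1 = β(A)`), and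
`f` enumerates `A` in increasing order starting from index `0`. -/
theorem stmt12 (n : ℕ) (w : Fin n → ℝ) (hpos : ∀ i, 0 < w i) (hdec : StrictAnti w)
    (hsi : ∀ i : Fin n, (∑ j ∈ Finset.univ.filter (fun j => i < j), w j) < w i)
    (q : ℝ) (hq1 : 0 < q) (hq2 : q ≤ ∑ i : Fin n, w i)
    (A Pm : Finset (Fin n))
    (hβ : (∑ i ∈ Pm, 2^(n - 1 - (i:ℕ)) : ℕ) + 1 = ∑ i ∈ A, 2^(n - 1 - (i:ℕ)))
    (hlo : (∑ i ∈ Pm, w i) < q) (hhi : q ≤ ∑ i ∈ A, w i)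
    (f : Fin A.card → Fin n) (hf : ∀ t, f t = (A.orderIsoOfFin rfl t : Fin n)) :
    (∀ i : Fin n, i ∉ A →
      shapley n w q i
        = ∑ t : Fin A.card,
            if i < f t then (1:ℝ)/(((f t : ℕ) + 1) * Nat.choose (f t : ℕ) (t : ℕ)) else 0) ∧
    (∀ s : Fin A.card,
      shapley n w q (f s)
        = (1:ℝ)/(((f s : ℕ) + 1) * Nat.choose (f s : ℕ) (s : ℕ))
          - ∑ t : Fin A.card,
              if f s < f t then (1:ℝ)/(((f t : ℕ) + 1) * Nat.choose (f t : ℕ) ((t : ℕ) - 1))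
              else 0) :=
  stmt12_general n w hsi q A Pm hβ hlo hhi f hf
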